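/- Let N ≥ 1, b > 0 and 0 < p ≤ 1. There exists C > 0 with the following property: if u, v : ℝ^N → ℂ are differentiable at a point x ≠ 0, then the map y ↦ |y|^{−b}(G(u(y)) − G(v(y))), where G(z) = |z|^p z, is differentiable at x and its gradient satisfies |∇(|·|^{−b}(G∘u − G∘v))(x)| ≤ C [ |x|^{−b−1}(|u(x)|^p + |v(x)|^p)|u(x) − v(x)| + |x|^{−b}|u(x)|^p |∇(u − v)(x)| + |x|^{−b} |∇v(x)| |u(x) − v(x)|^p ]. -/

import Mathlib

/-!
Write `G(z) = ‖z‖ ^ p • z`. Its derivative is `DG(z) = ‖z‖ ^ p • (id + p • ẑ ⊗ ẑ)` with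
`ẑ = z / ‖z‖`, so `‖DG(z)‖ ≤ (1 + p) ‖z‖ ^ p`, and for `p ≤ 1` it is `p`-Hölder:
the factor `‖z‖ ^ p` is `p`-Hölder because `t ↦ t ^ p` is subadditive, and the projections
`ẑ ⊗ ẑ` move by `O(min(1, ‖z - w‖ / ‖w‖))`, which the weight `‖w‖ ^ p` turns into
`O(‖z - w‖ ^ p)`.
The chain rule gives `D(G ∘ u - G ∘ v) = DG(u) (Du - Dv) + (DG(u) - DG(v)) Dv`, the mean value
theorem bounds `G(u) - G(v)`, and the product rule with `D‖x‖ ^ (-b) = O(‖x‖ ^ (-b-1))`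
assembles the estimate.
-/

open InnerProductSpace NormedSpace Topology Asymptotics

namespace Real

lemma abs_rpow_sub_rpow_le {a b p : ℝ} (ha : 0 ≤ a) (hb : 0 ≤ b) (hp0 : 0 ≤ p) (hp1 : p ≤ 1) :
    |a ^ p - b ^ p| ≤ |a - b| ^ p := by
  wlog hba : b ≤ a generalizing a b
  · rw [abs_sub_comm, abs_sub_comm a]
    exact this hb ha (le_of_not_ge hba)
  have hsub : a ^ p ≤ (a - b) ^ p + b ^ p := by
    simpa using rpow_add_le_add_rpow (sub_nonneg.2 hba) hb hp0 hp1
  rw [abs_of_nonneg (sub_nonneg.2 hba), abs_of_nonneg (sub_nonneg.2 (rpow_le_rpow hb hba hp0))]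
  linarith

lemma rpow_mul_le_mul_rpow_of_mul_le {a s t c p : ℝ} (ha : 0 ≤ a) (hs : 0 ≤ s) (ht : 0 ≤ t)
    (hp0 : 0 ≤ p) (hp1 : p ≤ 1) (hsc : s ≤ c) (hast : a * s ≤ c * t) :
    a ^ p * s ≤ c * t ^ p := by
  have hsplit : ∀ {r : ℝ}, 0 ≤ r → r = r ^ p * r ^ (1 - p) := fun hr => by
    rw [← rpow_add' hr (by norm_num), add_sub_cancel, rpow_one]
  have hc : 0 ≤ c := hs.trans hsc
  calc a ^ p * s = (a * s) ^ p * s ^ (1 - p) := by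
        rw [mul_rpow ha hs, mul_assoc, ← hsplit hs]
    _ ≤ (c * t) ^ p * c ^ (1 - p) := by gcongr
    _ = c * t ^ p := by rw [mul_rpow hc ht, mul_right_comm, ← hsplit hc]

end Real

section Normalize

variable {V : Type*} [NormedAddCommGroup V] [NormedSpace ℝ V]

lemma NormedSpace.norm_normalize_le (x : V) : ‖normalize x‖ ≤ 1 := by
  rcases eq_or_ne x 0 with rfl | hx
  · simp [normalize_zero_eq_zero]
  · exact (norm_normalize_eq_one_iff.2 hx).le

lemma NormedSpace.norm_mul_norm_normalize_sub_normalize_le (x y : V) :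
    ‖y‖ * ‖normalize x - normalize y‖ ≤ 2 * ‖x - y‖ := by
  have hdecomp : ‖y‖ • (normalize x - normalize y) = (x - y) + (‖y‖ - ‖x‖) • normalize x := by
    rw [smul_sub, norm_smul_normalize y, sub_smul, norm_smul_normalize x]
    abel
  calc ‖y‖ * ‖normalize x - normalize y‖ = ‖(x - y) + (‖y‖ - ‖x‖) • normalize x‖ := by
        rw [← hdecomp, norm_smul, norm_norm]
    _ ≤ ‖x - y‖ + |‖y‖ - ‖x‖| * 1 := by
        grw [norm_add_le, norm_smul, Real.norm_eq_abs, norm_normalize_le]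
    _ ≤ 2 * ‖x - y‖ := by
        grw [abs_norm_sub_norm_le, norm_sub_rev]; linarith

end Normalize

section InnerProductSpace

variable {E F : Type*} [NormedAddCommGroup E] [InnerProductSpace ℝ E]
  [NormedAddCommGroup F] [InnerProductSpace ℝ F]

lemma norm_rankOne_self_sub_rankOne_self_le {e f : F} (he : ‖e‖ ≤ 1) (hf : ‖f‖ ≤ 1) :
    ‖rankOne ℝ e e - rankOne ℝ f f‖ ≤ 2 * ‖e - f‖ := by
  have hdecomp : rankOne ℝ e e - rankOne ℝ f f = rankOne ℝ (e - f) e + rankOne ℝ f (e - f) := by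
    simp only [map_sub, sub_apply]
    abel
  calc ‖rankOne ℝ e e - rankOne ℝ f f‖ ≤ ‖e - f‖ * ‖e‖ + ‖f‖ * ‖e - f‖ := by
        grw [hdecomp, norm_add_le, norm_rankOne, norm_rankOne]
    _ ≤ 2 * ‖e - f‖ := by
        grw [he, hf]; linarith

lemma norm_id_add_smul_rankOne_normalize_le {p : ℝ} (hp : 0 ≤ p) (z : F) :
    ‖ContinuousLinearMap.id ℝ F + p • rankOne ℝ (normalize z) (normalize z)‖ ≤ 1 + p := by
  grw [norm_add_le, norm_smul, norm_rankOne, norm_normalize_le, norm_normalize_le,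
    ContinuousLinearMap.norm_id_le, Real.norm_of_nonneg hp, mul_one, mul_one]

lemma hasFDerivAt_norm_rpow_of_ne_zero (q : ℝ) {x : E} (hx : x ≠ 0) :
    HasFDerivAt (fun y : E => ‖y‖ ^ q) ((q * ‖x‖ ^ (q - 1)) • innerSL ℝ (normalize x)) x := by
  have hsq : ∀ y : E, (‖y‖ ^ 2) ^ (q / 2) = ‖y‖ ^ q := fun y => by
    rw [← Real.rpow_natCast, ← Real.rpow_mul (norm_nonneg y)]
    ring_nf
  have hx' : ‖x‖ ≠ 0 := norm_ne_zero_iff.2 hx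
  have h := (hasStrictFDerivAt_norm_sq x).hasFDerivAt.rpow_const (p := q / 2)
    (Or.inl (by positivity))
  simp only [hsq] at h
  convert h using 1
  have hpow : (‖x‖ ^ 2) ^ (q / 2 - 1) = ‖x‖ ^ (q - 1) / ‖x‖ := by
    rw [← Real.rpow_natCast, ← Real.rpow_mul (norm_nonneg x), ← Real.rpow_sub_one hx']
    ring_nf
  ext v
  simp only [NormedSpace.normalize, map_smul, smul_apply, coe_innerSL_apply, smul_eq_mul, hpow,
    nsmul_eq_mul, Nat.cast_ofNat]
  field_simp

lemma norm_smul_innerSL_normalize_le (a : ℝ) (x : E) :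
    ‖a • innerSL ℝ (normalize x)‖ ≤ ‖a‖ := by
  grw [norm_smul, innerSL_apply_norm, norm_normalize_le, mul_one]

noncomputable def normRpowSmulDeriv (p : ℝ) (z : F) : F →L[ℝ] F :=
  ‖z‖ ^ p • (ContinuousLinearMap.id ℝ F + p • rankOne ℝ (normalize z) (normalize z))

lemma hasFDerivAt_norm_rpow_smul_zero {p : ℝ} (hp : 0 < p) :
    HasFDerivAt (fun w : F => ‖w‖ ^ p • w) (0 : F →L[ℝ] F) 0 := by
  rw [hasFDerivAt_iff_isLittleO_nhds_zero]
  have hsmall : (fun h : F => ‖h‖ ^ p) =o[𝓝 0] (fun _ => (1 : ℝ)) := by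
    rw [isLittleO_one_iff]
    simpa [Real.zero_rpow hp.ne'] using
      (continuous_norm.rpow_const fun _ => Or.inr hp.le).tendsto (0 : F)
  simpa using hsmall.smul_isBigO (isBigO_refl (fun h : F => h) _)

lemma hasFDerivAt_norm_rpow_smul {p : ℝ} (hp : 0 < p) (z : F) :
    HasFDerivAt (fun w : F => ‖w‖ ^ p • w) (normRpowSmulDeriv p z) z := by
  rcases eq_or_ne z 0 with rfl | hz
  · simpa [normRpowSmulDeriv, Real.zero_rpow hp.ne'] using hasFDerivAt_norm_rpow_smul_zero hp
  refine ((hasFDerivAt_norm_rpow_of_ne_zero p hz).smul (hasFDerivAt_id z)).congr_fderiv ?_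
  have hpow : ‖z‖ ^ (p - 1) * ‖z‖ = ‖z‖ ^ p := by
    rw [Real.rpow_sub_one (norm_ne_zero_iff.2 hz), div_mul_cancel₀ _ (norm_ne_zero_iff.2 hz)]
  have hz_polar := (norm_smul_normalize z).symm
  ext v
  simp only [normRpowSmulDeriv, add_apply, smul_apply, ContinuousLinearMap.id_apply,
    ContinuousLinearMap.smulRight_apply, rankOne_def, innerSL_apply_apply, id]
  set r := ‖z‖
  set e := normalize z
  rw [hz_polar, smul_smul, ← hpow]
  module

lemma norm_normRpowSmulDeriv_le {p : ℝ} (hp : 0 ≤ p) (z : F) :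
    ‖normRpowSmulDeriv p z‖ ≤ (1 + p) * ‖z‖ ^ p := by
  rw [normRpowSmulDeriv, norm_smul, Real.norm_of_nonneg (by positivity), mul_comm]
  grw [norm_id_add_smul_rankOne_normalize_le hp]

lemma norm_normRpowSmulDeriv_sub_le {p : ℝ} (hp0 : 0 ≤ p) (hp1 : p ≤ 1) (z w : F) :
    ‖normRpowSmulDeriv p z - normRpowSmulDeriv p w‖ ≤ (1 + 5 * p) * ‖z - w‖ ^ p := by
  set P : F → F →L[ℝ] F := fun x => rankOne ℝ (normalize x) (normalize x)
  have hdecomp : normRpowSmulDeriv p z - normRpowSmulDeriv p w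
      = (‖z‖ ^ p - ‖w‖ ^ p) • (ContinuousLinearMap.id ℝ F + p • P z)
        + (p * ‖w‖ ^ p) • (P z - P w) := by
    simp only [normRpowSmulDeriv, P]
    module
  have hradial : |‖z‖ ^ p - ‖w‖ ^ p| ≤ ‖z - w‖ ^ p :=
    (Real.abs_rpow_sub_rpow_le (norm_nonneg z) (norm_nonneg w) hp0 hp1).trans
      (Real.rpow_le_rpow (abs_nonneg _) (abs_norm_sub_norm_le z w) hp0)
  have hangular : ‖w‖ ^ p * ‖P z - P w‖ ≤ 4 * ‖z - w‖ ^ p := by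
    have hunit : ‖normalize z - normalize w‖ ≤ 2 := by
      grw [norm_sub_le, norm_normalize_le, norm_normalize_le]; norm_num
    grw [norm_rankOne_self_sub_rankOne_self_le (norm_normalize_le z) (norm_normalize_le w),
      mul_left_comm, Real.rpow_mul_le_mul_rpow_of_mul_le (norm_nonneg w) (norm_nonneg _)
        (norm_nonneg _) hp0 hp1 hunit (norm_mul_norm_normalize_sub_normalize_le z w)]
    linarith
  calc ‖normRpowSmulDeriv p z - normRpowSmulDeriv p w‖
      ≤ |‖z‖ ^ p - ‖w‖ ^ p| * (1 + p) + p * (‖w‖ ^ p * ‖P z - P w‖) := by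
        grw [hdecomp, norm_add_le, norm_smul, norm_smul,
          norm_id_add_smul_rankOne_normalize_le hp0 z, Real.norm_eq_abs,
          Real.norm_of_nonneg (by positivity), mul_assoc]
    _ ≤ ‖z - w‖ ^ p * (1 + p) + p * (4 * ‖z - w‖ ^ p) := by grw [hradial, hangular]
    _ = (1 + 5 * p) * ‖z - w‖ ^ p := by ring

lemma norm_norm_rpow_smul_sub_le {p : ℝ} (hp : 0 < p) (z w : F) :
    ‖‖z‖ ^ p • z - ‖w‖ ^ p • w‖ ≤ (1 + p) * (‖z‖ ^ p + ‖w‖ ^ p) * ‖z - w‖ := by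
  set R := max ‖z‖ ‖w‖
  have hz : z ∈ Metric.closedBall (0 : F) R := by simp [R]
  have hw : w ∈ Metric.closedBall (0 : F) R := by simp [R]
  have hR : R ^ p ≤ ‖z‖ ^ p + ‖w‖ ^ p := by
    have := Real.rpow_nonneg (norm_nonneg z) p
    have := Real.rpow_nonneg (norm_nonneg w) p
    rcases max_cases ‖z‖ ‖w‖ with ⟨hmax, -⟩ | ⟨hmax, -⟩ <;> rw [show R = _ from hmax] <;> linarith
  have hbound : ∀ ζ ∈ Metric.closedBall (0 : F) R, ‖normRpowSmulDeriv p ζ‖ ≤ (1 + p) * R ^ p :=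
    fun ζ hζ => by
      grw [norm_normRpowSmulDeriv_le hp.le, show ‖ζ‖ ≤ R by simpa using hζ]
  grw [(convex_closedBall (0 : F) R).norm_image_sub_le_of_norm_hasFDerivWithin_le
    (fun ζ _ => (hasFDerivAt_norm_rpow_smul hp ζ).hasFDerivWithinAt) hbound hw hz, hR]

end InnerProductSpace

variable {E F : Type*} [NormedAddCommGroup E] [NormedSpace ℝ E]
  [NormedAddCommGroup F] [InnerProductSpace ℝ F] in
lemma norm_normRpowSmulDeriv_comp_sub_comp_le {p : ℝ} (hp0 : 0 ≤ p) (hp1 : p ≤ 1) (z w : F)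
    (A B : E →L[ℝ] F) :
    ‖normRpowSmulDeriv p z ∘L A - normRpowSmulDeriv p w ∘L B‖
      ≤ (1 + 5 * p) * (‖z‖ ^ p * ‖A - B‖ + ‖B‖ * ‖z - w‖ ^ p) := by
  have hdecomp : normRpowSmulDeriv p z ∘L A - normRpowSmulDeriv p w ∘L B
      = normRpowSmulDeriv p z ∘L (A - B)
        + (normRpowSmulDeriv p z - normRpowSmulDeriv p w) ∘L B := by
    rw [ContinuousLinearMap.comp_sub, ContinuousLinearMap.sub_comp]
    abel
  calc _ ≤ (1 + p) * ‖z‖ ^ p * ‖A - B‖ + (1 + 5 * p) * ‖z - w‖ ^ p * ‖B‖ := by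
        grw [hdecomp, norm_add_le, ContinuousLinearMap.opNorm_comp_le,
          ContinuousLinearMap.opNorm_comp_le, norm_normRpowSmulDeriv_le hp0,
          norm_normRpowSmulDeriv_sub_le hp0 hp1]
    _ ≤ (1 + 5 * p) * (‖z‖ ^ p * ‖A - B‖ + ‖B‖ * ‖z - w‖ ^ p) := by
        have : 0 ≤ ‖z‖ ^ p * ‖A - B‖ := by positivity
        nlinarith

theorem stmt3_general (N : ℕ) (b p : ℝ) (hp0 : 0 < p) (hp1 : p ≤ 1) :
    ∃ C : ℝ, 0 < C ∧
      ∀ (u v : EuclideanSpace ℝ (Fin N) → ℂ) (x : EuclideanSpace ℝ (Fin N)), x ≠ 0 →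
        DifferentiableAt ℝ u x → DifferentiableAt ℝ v x →
        DifferentiableAt ℝ
            (fun y => (‖y‖ ^ (-b) : ℝ) • ((‖u y‖ ^ p : ℝ) • u y - (‖v y‖ ^ p : ℝ) • v y)) x ∧
          ‖fderiv ℝ
              (fun y => (‖y‖ ^ (-b) : ℝ) • ((‖u y‖ ^ p : ℝ) • u y - (‖v y‖ ^ p : ℝ) • v y)) x‖ ≤
            C * (‖x‖ ^ (-b - 1) * (‖u x‖ ^ p + ‖v x‖ ^ p) * ‖u x - v x‖
              + ‖x‖ ^ (-b) * ‖u x‖ ^ p * ‖fderiv ℝ (fun y => u y - v y) x‖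
              + ‖x‖ ^ (-b) * ‖fderiv ℝ v x‖ * ‖u x - v x‖ ^ p) := by
  refine ⟨(1 + 5 * p) * (1 + |b|), by positivity, fun u v x hx hu hv => ?_⟩
  have hG := ((hasFDerivAt_norm_rpow_smul hp0 (u x)).comp x hu.hasFDerivAt).sub
    ((hasFDerivAt_norm_rpow_smul hp0 (v x)).comp x hv.hasFDerivAt)
  have hf : HasFDerivAt (fun y => ‖y‖ ^ (-b) • (‖u y‖ ^ p • u y - ‖v y‖ ^ p • v y)) _ x :=
    (hasFDerivAt_norm_rpow_of_ne_zero (-b) hx).smul hG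
  refine ⟨hf.differentiableAt, ?_⟩
  rw [hf.fderiv, fderiv_fun_sub hu hv]
  have hweight : ‖-b * ‖x‖ ^ (-b - 1)‖ = |b| * ‖x‖ ^ (-b - 1) := by
    rw [norm_mul, norm_neg, Real.norm_eq_abs, Real.norm_of_nonneg (by positivity)]
  calc _ ≤ ‖x‖ ^ (-b) * ((1 + 5 * p) * (‖u x‖ ^ p * ‖fderiv ℝ u x - fderiv ℝ v x‖
          + ‖fderiv ℝ v x‖ * ‖u x - v x‖ ^ p))
        + |b| * ‖x‖ ^ (-b - 1) * ((1 + p) * (‖u x‖ ^ p + ‖v x‖ ^ p) * ‖u x - v x‖) := by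
        grw [norm_add_le, norm_smul, ContinuousLinearMap.norm_smulRight_apply,
          norm_smul_innerSL_normalize_le, hweight, Real.norm_of_nonneg (by positivity),
          norm_normRpowSmulDeriv_comp_sub_comp_le hp0.le hp1, norm_norm_rpow_smul_sub_le hp0]
    _ ≤ _ := by
        have hA : 0 ≤ ‖x‖ ^ (-b) * (‖u x‖ ^ p * ‖fderiv ℝ u x - fderiv ℝ v x‖
            + ‖fderiv ℝ v x‖ * ‖u x - v x‖ ^ p) := by positivity
        have hB : 0 ≤ ‖x‖ ^ (-b - 1) * (‖u x‖ ^ p + ‖v x‖ ^ p) * ‖u x - v x‖ := by positivity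
        have hpb := mul_nonneg hp0.le (abs_nonneg b)
        nlinarith [mul_nonneg (abs_nonneg b) hA, mul_nonneg hpb hA, mul_nonneg hpb hB,
          mul_nonneg hp0.le hB]

/-- Second-derivative-type estimate for the inhomogeneous nonlinearity, case `0 < p ≤ 1`:
if `u, v` are differentiable at `x ≠ 0` then `y ↦ |y|^{-b}(G(u(y)) - G(v(y)))`, with
`G(z) = |z|^p z`, is differentiable at `x`, and its gradient obeys the stated bound. -/
theorem stmt3 (N : ℕ) (hN : 1 ≤ N) (b p : ℝ) (hb : 0 < b) (hp0 : 0 < p) (hp1 : p ≤ 1) :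
    ∃ C : ℝ, 0 < C ∧
      ∀ (u v : EuclideanSpace ℝ (Fin N) → ℂ) (x : EuclideanSpace ℝ (Fin N)), x ≠ 0 →
        DifferentiableAt ℝ u x → DifferentiableAt ℝ v x →
        DifferentiableAt ℝ
            (fun y => (‖y‖ ^ (-b) : ℝ) • ((‖u y‖ ^ p : ℝ) • u y - (‖v y‖ ^ p : ℝ) • v y)) x ∧
          ‖fderiv ℝ
              (fun y => (‖y‖ ^ (-b) : ℝ) • ((‖u y‖ ^ p : ℝ) • u y - (‖v y‖ ^ p : ℝ) • v y)) x‖ ≤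
            C * (‖x‖ ^ (-b - 1) * (‖u x‖ ^ p + ‖v x‖ ^ p) * ‖u x - v x‖
              + ‖x‖ ^ (-b) * ‖u x‖ ^ p * ‖fderiv ℝ (fun y => u y - v y) x‖
              + ‖x‖ ^ (-b) * ‖fderiv ℝ v x‖ * ‖u x - v x‖ ^ p) :=
  stmt3_general N b p hp0 hp1
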